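/- Among all scalar baselines b, the trace of the variance of the estimator (r(τ) − b)·g(τ), where g(τ) = ∇θ log πθ(τ), is uniquely minimized at b* = E[r(τ)·‖g(τ)‖²] / E[‖g(τ)‖²]. -/
import Mathlib


open MeasureTheory

/-- Among all scalar baselines `b`, the trace of the variance of `(r(τ) - b) • g(τ)`,
with score `g` satisfying `E[g] = 0` and `0 < E[‖g‖²] < ∞`, is uniquely minimized at
`b* = E[r ‖g‖²] / E[‖g‖²]` (uniqueness: any other baseline gives strictly larger trace). -/
theorem stmt2 {Ω : Type*} [MeasurableSpace Ω] (P : Measure Ω) [IsProbabilityMeasure P]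
    {d : ℕ} (r : Ω → ℝ) (g : Ω → EuclideanSpace ℝ (Fin d))
    (hg0 : ∫ ω, g ω ∂P = 0)
    (hgint : Integrable g P)
    (hw : Integrable (fun ω => ‖g ω‖ ^ 2) P)
    (hrw : Integrable (fun ω => r ω * ‖g ω‖ ^ 2) P)
    (hr2w : Integrable (fun ω => (r ω) ^ 2 * ‖g ω‖ ^ 2) P)
    (hrg : Integrable (fun ω => r ω • g ω) P)
    (hwpos : 0 < ∫ ω, ‖g ω‖ ^ 2 ∂P)
    (bstar : ℝ)
    (hbstar : bstar = (∫ ω, r ω * ‖g ω‖ ^ 2 ∂P) / ∫ ω, ‖g ω‖ ^ 2 ∂P)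
    (TV : ℝ → ℝ)
    (hTV : ∀ b, TV b =
      (∫ ω, (r ω - b) ^ 2 * ‖g ω‖ ^ 2 ∂P) - ‖∫ ω, (r ω - b) • g ω ∂P‖ ^ 2) :
    ∀ b, b ≠ bstar → TV bstar < TV b := by
  set W := ∫ ω, ‖g ω‖ ^ 2 ∂P with hW
  set R := ∫ ω, r ω * ‖g ω‖ ^ 2 ∂P with hR
  set S := ∫ ω, (r ω) ^ 2 * ‖g ω‖ ^ 2 ∂P with hS
  have hmean : ∀ b : ℝ, (∫ ω, (r ω - b) • g ω ∂P) = ∫ ω, r ω • g ω ∂P := by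
    intro b
    have h : (fun ω => (r ω - b) • g ω) = fun ω => r ω • g ω - b • g ω := by
      funext ω; rw [sub_smul]
    have hbg : Integrable (fun ω => b • g ω) P := hgint.smul b
    rw [h, integral_sub hrg hbg, integral_smul, hg0, smul_zero, sub_zero]
  have hquad : ∀ b : ℝ, (∫ ω, (r ω - b) ^ 2 * ‖g ω‖ ^ 2 ∂P)
      = S - 2 * b * R + b ^ 2 * W := by
    intro b
    have h : (fun ω => (r ω - b) ^ 2 * ‖g ω‖ ^ 2)
        = fun ω => ((r ω) ^ 2 * ‖g ω‖ ^ 2 - (2 * b) * (r ω * ‖g ω‖ ^ 2))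
            + (b ^ 2) * ‖g ω‖ ^ 2 := by
      funext ω; ring
    have h1 : Integrable (fun ω => (r ω) ^ 2 * ‖g ω‖ ^ 2 - (2 * b) * (r ω * ‖g ω‖ ^ 2)) P :=
      hr2w.sub (hrw.const_mul _)
    have h2 : Integrable (fun ω => (b ^ 2) * ‖g ω‖ ^ 2) P := hw.const_mul _
    have h3 : Integrable (fun ω => (2 * b) * (r ω * ‖g ω‖ ^ 2)) P := hrw.const_mul _
    rw [h, integral_add h1 h2, integral_sub hr2w h3, integral_const_mul, integral_const_mul]
  intro b hb
  rw [hTV b, hTV bstar, hmean, hmean, hquad, hquad]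
  have hWne : W ≠ 0 := ne_of_gt hwpos
  have hRW : bstar * W = R := by rw [hbstar]; field_simp
  have hdiff : b - bstar ≠ 0 := sub_ne_zero.mpr hb
  have key : 0 < W * ((b - bstar) * (b - bstar)) :=
    mul_pos hwpos (mul_self_pos.mpr hdiff)
  have expand : (S - 2 * b * R + b ^ 2 * W) - (S - 2 * bstar * R + bstar ^ 2 * W)
      = W * ((b - bstar) * (b - bstar)) := by rw [← hRW]; ring
  linarith [key, expand]
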